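/- Suppose the eigenvalues of a family of self-adjoint operators J_s on (0, ∞) are exactly σ_{i,j}(s) = (ρ_i − A) + (τ_j − B)/s for i + j > 0, with A, B > 0, (ρ_i), (τ_j) strictly increasing unbounded starting at 0, and the pair nondegenerate. Then there exists s₀ > 0 such that for all 0 < s < s₀, 0 is not of the form σ_{i,j}(s) unless s lies in the strictly decreasing sequence (s_n^{(1)}) of zeros accumulating at 0; moreover between consecutive terms of this sequence no σ_{i,j} vanishes. -/

import Mathlib

/-!
At an instant `s > 0`, `σ_{i,j}(s) = 0` means `(ρ_i - A) s = B - τ_j`. If `A s` is smaller than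
every positive gap `τ_j - B`, this forces `ρ_i > A` and `τ_j < B`, the case `ρ_i = A`,
`τ_j = B` being excluded by nondegeneracy. So below `s₀` the singular instants are values
`(B - τ_j) / (ρ_i - A)` with `j` among the finitely many indices with `τ_j < B`; as `ρ_i → ∞`,
only finitely many of them exceed any `ε > 0`, while `j = 0` and `i → ∞` give singular instants
arbitrarily close to `0`. A set of positive reals with these two properties is the range of a
strictly decreasing sequence tending to `0`.
-/

open Set Filter Topology

theorem Set.exists_strictAnti_range_eq {α : Type*} [LinearOrder α] {S : Set α}
    (hne : S.Nonempty) (hfin : ∀ x ∈ S, (S ∩ Ici x).Finite)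
    (hmin : ∀ x ∈ S, ∃ y ∈ S, y < x) :
    ∃ u : ℕ → α, StrictAnti u ∧ range u = S := by
  -- `S` with the reversed order is locally finite, with a bottom and no top, hence `≃o ℕ`.
  let ι := (↥S)ᵒᵈ
  have hIcc (a b : ι) : (Icc a b).Finite :=
    ((hfin _ (OrderDual.ofDual b).2).preimage Subtype.val_injective.injOn).subset
      fun x hx => ⟨x.2, hx.2⟩
  let _ : LocallyFiniteOrder ι := .ofFiniteIcc hIcc
  let _ : SuccOrder ι := LinearLocallyFiniteOrder.succOrder ι
  let _ : PredOrder ι := LinearLocallyFiniteOrder.predOrder ι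
  have : NoMaxOrder ι := ⟨fun x => by
    obtain ⟨y, hy, hyx⟩ := hmin _ (OrderDual.ofDual x).2
    exact ⟨OrderDual.toDual ⟨y, hy⟩, hyx⟩⟩
  obtain ⟨x₀, hx₀⟩ := hne
  obtain ⟨m, ⟨hmS, hx₀m⟩, hmax⟩ := (hfin x₀ hx₀).exists_maximal ⟨x₀, hx₀, le_rfl⟩
  let _ : OrderBot ι :=
    { bot := OrderDual.toDual ⟨m, hmS⟩
      bot_le := fun x => le_of_not_gt fun h =>
        (hmax ⟨x.2, hx₀m.trans h.le⟩ h.le).not_gt h }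
  let e := (orderIsoNatOfLinearSuccPredArch (ι := ι)).symm
  refine ⟨fun n => (OrderDual.ofDual (α := S) (e n) : α), fun a b hab => e.strictMono hab, ?_⟩
  ext x
  refine ⟨?_, fun hx => ⟨e.symm (OrderDual.toDual ⟨x, hx⟩), by simp⟩⟩
  rintro ⟨n, rfl⟩
  exact Subtype.prop _

theorem Real.exists_strictAnti_tendsto_zero_range_eq {S : Set ℝ} (hpos : ∀ x ∈ S, 0 < x)
    (hfin : ∀ ε > 0, (S ∩ Ici ε).Finite) (hsmall : ∀ ε > 0, ∃ x ∈ S, x < ε) :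
    ∃ u : ℕ → ℝ, StrictAnti u ∧ range u = S ∧ Tendsto u atTop (𝓝 0) := by
  obtain ⟨x₀, hx₀, -⟩ := hsmall 1 one_pos
  obtain ⟨u, hu, hrange⟩ := exists_strictAnti_range_eq ⟨x₀, hx₀⟩
    (fun x hx => hfin x (hpos x hx)) (fun x hx => hsmall x (hpos x hx))
  have hmem (n : ℕ) : u n ∈ S := hrange ▸ mem_range_self n
  refine ⟨u, hu, hrange, tendsto_order.2
    ⟨fun a ha => .of_forall fun n => ha.trans (hpos _ (hmem n)), fun ε hε => ?_⟩⟩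
  rw [← Nat.cofinite_eq_atTop]
  filter_upwards [((hfin ε hε).preimage hu.injective.injOn).eventually_cofinite_notMem]
    with n hn
  exact lt_of_not_ge fun h => hn ⟨hmem n, h⟩

theorem StrictMono.eq_of_apply_eq {α β : Type*} [LinearOrder α] [Preorder β] {f : α → β}
    (hf : StrictMono f) {a : β} {k i : α} (hk : a ≤ f k) (hlt : ∀ i < k, f i < a)
    (hi : f i = a) : i = k :=
  le_antisymm (le_of_not_gt fun h => (hf h).not_ge (hi ▸ hk))
    (le_of_not_gt fun h => (hlt i h).ne hi)

theorem Monotone.exists_pos_le_sub {τ : ℕ → ℝ} (hτ : Monotone τ) {B : ℝ} (hB : ∃ j, B < τ j) :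
    ∃ δ > 0, ∀ j, B < τ j → δ ≤ τ j - B := by
  classical
  refine ⟨τ (Nat.find hB) - B, sub_pos.2 (Nat.find_spec hB), fun j hj => ?_⟩
  linarith [hτ (Nat.find_min' hB hj)]

theorem Monotone.finite_setOf_le {ρ : ℕ → ℝ} (hρ : Monotone ρ) (hρub : ∀ C, ∃ i, C < ρ i)
    (C : ℝ) : {i | ρ i ≤ C}.Finite := by
  obtain ⟨I, hI⟩ := hρub C
  exact (finite_Iio I).subset fun i hi => lt_of_not_ge fun hIi => (hI.trans_le (hρ hIi)).not_ge hi

theorem Monotone.finite_setOf_lt {τ : ℕ → ℝ} (hτ : Monotone τ) {B : ℝ} {k : ℕ} (hk : B ≤ τ k) :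
    {j | τ j < B}.Finite :=
  (finite_Iio k).subset fun _ hj => lt_of_not_ge fun h => (hk.trans (hτ h)).not_gt hj

/-- The eigenvalue `σ_{i,j}(s)` of `J_s`. -/
noncomputable def sigma (A B : ℝ) (ρ τ : ℕ → ℝ) (i j : ℕ) (s : ℝ) : ℝ := (ρ i - A) + (τ j - B) / s

def singularInstants (A B : ℝ) (ρ τ : ℕ → ℝ) : Set ℝ :=
  {s | 0 < s ∧ ∃ i j, 0 < i + j ∧ sigma A B ρ τ i j s = 0}

/-- The instants `s_n^{(1)}`. -/
def firstKindInstants (A B : ℝ) (ρ τ : ℕ → ℝ) : Set ℝ :=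
  {s | ∃ i j, A < ρ i ∧ τ j < B ∧ (ρ i - A) * s = B - τ j}

variable {A B : ℝ} {ρ τ : ℕ → ℝ}

theorem sigma_eq_zero_iff {i j : ℕ} {s : ℝ} (hs : s ≠ 0) :
    sigma A B ρ τ i j s = 0 ↔ (ρ i - A) * s = B - τ j := by
  rw [sigma, ← mul_right_inj' hs]
  constructor <;> intro h <;> field_simp at h ⊢ <;> linarith

theorem singularInstants_inter_Iio_subset_firstKindInstants (hA : 0 < A)
    (hρ : StrictMono ρ) (hρ0 : ρ 0 = 0) (hτ : StrictMono τ) {istar jstar : ℕ}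
    (histar : A ≤ ρ istar ∧ ∀ i < istar, ρ i < A) (hjstar : B ≤ τ jstar ∧ ∀ j < jstar, τ j < B)
    (hnondeg : ¬(ρ istar = A ∧ τ jstar = B)) {δ : ℝ} (hδ : ∀ j, B < τ j → δ ≤ τ j - B) :
    singularInstants A B ρ τ ∩ Iio (δ / A) ⊆ firstKindInstants A B ρ τ := by
  rintro s ⟨⟨hs, i, j, -, hσ⟩, hsδ⟩
  rw [sigma_eq_zero_iff hs.ne'] at hσ
  rw [mem_Iio, lt_div_iff₀ hA] at hsδ
  have hρi : A < ρ i := by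
    rcases lt_trichotomy (ρ i) A with hlt | heq | hgt
    · have hρi_nonneg : 0 ≤ ρ i := hρ0 ▸ hρ.monotone (Nat.zero_le i)
      have hgap : τ j - B = (A - ρ i) * s := by linarith
      have hτj : B < τ j := by nlinarith
      nlinarith [hδ j hτj]
    · have hτj : τ j = B := by rw [heq, sub_self, zero_mul] at hσ; linarith
      exact absurd ⟨hρ.eq_of_apply_eq histar.1 histar.2 heq ▸ heq,
        hτ.eq_of_apply_eq hjstar.1 hjstar.2 hτj ▸ hτj⟩ hnondeg
    · exact hgt
  exact ⟨i, j, hρi, sub_pos.1 (hσ ▸ mul_pos (sub_pos.2 hρi) hs), hσ⟩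

theorem finite_firstKindInstants_inter_Ici (hρ : Monotone ρ) (hρub : ∀ C, ∃ i, C < ρ i)
    (hτ : ∀ j, 0 ≤ τ j) (hτB : {j | τ j < B}.Finite) {ε : ℝ} (hε : 0 < ε) :
    (firstKindInstants A B ρ τ ∩ Ici ε).Finite := by
  refine (((hρ.finite_setOf_le hρub (A + B / ε)).prod hτB).image
    fun p => (B - τ p.2) / (ρ p.1 - A)).subset ?_
  rintro s ⟨⟨i, j, hi, hj, hs⟩, hεs⟩
  refine ⟨(i, j), ⟨?_, hj⟩, ?_⟩
  · change ρ i ≤ A + B / ε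
    rw [← sub_le_iff_le_add', le_div_iff₀ hε]
    nlinarith [hτ j, mem_Ici.1 hεs]
  · simp only
    rw [div_eq_iff (sub_pos.2 hi).ne', ← hs, mul_comm]

theorem exists_mem_singularInstants_lt (hA : 0 ≤ A) (hB : 0 < B) (hρ0 : ρ 0 = 0)
    (hρub : ∀ C, ∃ i, C < ρ i) (hτ0 : τ 0 = 0) {t : ℝ} (ht : 0 < t) :
    ∃ s ∈ singularInstants A B ρ τ, s < t := by
  obtain ⟨i, hi⟩ := hρub (A + B / t)
  have hBt : 0 < B / t := div_pos hB ht
  have hiA : 0 < ρ i - A := by linarith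
  have hi0 : i ≠ 0 := by rintro rfl; linarith
  refine ⟨B / (ρ i - A), ⟨div_pos hB hiA, i, 0, by omega, ?_⟩, ?_⟩
  · rw [sigma_eq_zero_iff (div_pos hB hiA).ne', hτ0]
    field_simp; ring
  · rw [div_lt_iff₀ hiA, mul_comm]
    exact (div_lt_iff₀ ht).1 (by linarith)

/-- Near `0`, the singular instants of `J_s` form exactly a strictly decreasing
sequence tending to `0`, and between consecutive terms no eigenvalue function
`σ_{i,j}` vanishes. -/
theorem singular_instants_near_zero_sequence
    (A B : ℝ) (hA : 0 < A) (hB : 0 < B)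
    (ρ τ : ℕ → ℝ) (hρ : StrictMono ρ) (hρ0 : ρ 0 = 0) (hρub : ∀ C : ℝ, ∃ i, C < ρ i)
    (hτ : StrictMono τ) (hτ0 : τ 0 = 0) (hτub : ∀ C : ℝ, ∃ j, C < τ j)
    (istar jstar : ℕ)
    (histar : A ≤ ρ istar ∧ ∀ i < istar, ρ i < A)
    (hjstar : B ≤ τ jstar ∧ ∀ j < jstar, τ j < B)
    (hnondeg : ¬(ρ istar = A ∧ τ jstar = B)) :
    ∃ s₀ : ℝ, 0 < s₀ ∧ ∃ seq : ℕ → ℝ, StrictAnti seq ∧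
      (∀ n : ℕ, 0 < seq n ∧ seq n < s₀) ∧
      Filter.Tendsto seq Filter.atTop (nhds 0) ∧
      ∀ s : ℝ, 0 < s → s < s₀ →
        ((∃ i j : ℕ, 0 < i + j ∧ (ρ i - A) + (τ j - B) / s = 0) ↔ ∃ n : ℕ, s = seq n) := by
  obtain ⟨δ, hδ, hδτ⟩ := hτ.monotone.exists_pos_le_sub (hτub B)
  have hs₀ : 0 < δ / A := div_pos hδ hA
  set Z := singularInstants A B ρ τ ∩ Iio (δ / A)
  have hfin (ε : ℝ) (hε : 0 < ε) : (Z ∩ Ici ε).Finite :=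
    (finite_firstKindInstants_inter_Ici hρ.monotone hρub
      (fun j => hτ0 ▸ hτ.monotone (Nat.zero_le j)) (hτ.monotone.finite_setOf_lt hjstar.1) hε).subset
      (inter_subset_inter_left _ (singularInstants_inter_Iio_subset_firstKindInstants hA hρ hρ0 hτ
        histar hjstar hnondeg hδτ))
  have hsmall (ε : ℝ) (hε : 0 < ε) : ∃ s ∈ Z, s < ε := by
    obtain ⟨s, hs, hsε⟩ := exists_mem_singularInstants_lt hA.le hB hρ0 hρub hτ0 (lt_min hε hs₀)
    exact ⟨s, ⟨hs, (lt_min_iff.1 hsε).2⟩, (lt_min_iff.1 hsε).1⟩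
  obtain ⟨seq, hanti, hrange, hlim⟩ :=
    Real.exists_strictAnti_tendsto_zero_range_eq (fun s hs => hs.1.1) hfin hsmall
  have hmem (n : ℕ) : seq n ∈ Z := hrange ▸ mem_range_self n
  refine ⟨δ / A, hs₀, seq, hanti, fun n => ⟨(hmem n).1.1, (hmem n).2⟩, hlim, fun s hs hsδ => ?_⟩
  have hsingular : (∃ i j : ℕ, 0 < i + j ∧ (ρ i - A) + (τ j - B) / s = 0) ↔ s ∈ Z :=
    ⟨fun h => ⟨⟨hs, h⟩, hsδ⟩, fun h => h.1.2⟩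
  rw [hsingular, ← hrange]
  exact exists_congr fun n => eq_comm
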